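/- arXiv:q-alg/9710027 — 3 statements merged into one kernel-verified Lean document; each statement's English description precedes it below -/
import Mathlib

section
/- Let t be a real number with t > 1. Define the 2×2 matrices M(t), D(t), M̃(t) by M₁₁(t) = (t³+t⁻³)(t−t⁻¹)(t²+t⁻²)/(t⁶+t⁻⁶), M₂₂(t) = (t³−t⁻³)(t+t⁻¹)(t²+t⁻²)/(t⁶+t⁻⁶), M₁₂(t) = M₂₁(t) = (t³−t⁻³)(t²+t⁻²)/(t⁶+t⁻⁶), D(t) = diag(t−t⁻¹, t³−t⁻³), and M̃(t) = [[t²−t⁻², −(t³−t⁻³)], [−(t³−t⁻³), t⁶−t⁻⁶]]. Then M̃(t)·D(t)⁻¹·M(t) = D(t); equivalently D(t)·M(t)⁻¹·D(t) = M̃(t). -/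
/-
The first identity is an identity of rational functions in `t`, checked entry by entry once `D(t)`
is known to be invertible, which over `ℝ` only needs `t ≠ 0` and `t ^ 2 ≠ 1`. The second is then
formal: the first says `M(t)⁻¹ = D(t)⁻¹ M̃(t) D(t)⁻¹`.
-/

open Matrix

/-- The matrix `M(t)` of the G₂ case. -/
noncomputable def MG2 (t : ℝ) : Matrix (Fin 2) (Fin 2) ℝ :=
  !![(t ^ (3:ℤ) + t ^ (-3:ℤ)) * (t - t⁻¹) * (t ^ (2:ℤ) + t ^ (-2:ℤ)) / (t ^ (6:ℤ) + t ^ (-6:ℤ)),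
     (t ^ (3:ℤ) - t ^ (-3:ℤ)) * (t ^ (2:ℤ) + t ^ (-2:ℤ)) / (t ^ (6:ℤ) + t ^ (-6:ℤ));
     (t ^ (3:ℤ) - t ^ (-3:ℤ)) * (t ^ (2:ℤ) + t ^ (-2:ℤ)) / (t ^ (6:ℤ) + t ^ (-6:ℤ)),
     (t ^ (3:ℤ) - t ^ (-3:ℤ)) * (t + t⁻¹) * (t ^ (2:ℤ) + t ^ (-2:ℤ)) / (t ^ (6:ℤ) + t ^ (-6:ℤ))]

/-- The diagonal matrix `D(t)` of the G₂ case. -/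
noncomputable def DG2 (t : ℝ) : Matrix (Fin 2) (Fin 2) ℝ :=
  !![t - t⁻¹, 0;
     0, t ^ (3:ℤ) - t ^ (-3:ℤ)]

/-- The deformed symmetrized Cartan matrix `M̃(t)` of G₂. -/
noncomputable def MtG2 (t : ℝ) : Matrix (Fin 2) (Fin 2) ℝ :=
  !![t ^ (2:ℤ) - t ^ (-2:ℤ), -(t ^ (3:ℤ) - t ^ (-3:ℤ));
     -(t ^ (3:ℤ) - t ^ (-3:ℤ)), t ^ (6:ℤ) - t ^ (-6:ℤ)]

theorem Matrix.mul_inv_mul_eq_of_mul_inv_mul_eq {n R : Type*} [Fintype n] [DecidableEq n]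
    [CommRing R] {A D M : Matrix n n R} (hD : IsUnit D.det) (h : A * D⁻¹ * M = D) :
    D * M⁻¹ * D = A := by
  have hM : M⁻¹ = D⁻¹ * A * D⁻¹ := by
    refine inv_eq_left_inv ?_
    calc D⁻¹ * A * D⁻¹ * M = D⁻¹ * (A * D⁻¹ * M) := by simp only [Matrix.mul_assoc]
      _ = 1 := by rw [h, nonsing_inv_mul D hD]
  rw [hM, ← Matrix.mul_assoc, ← Matrix.mul_assoc, mul_nonsing_inv D hD, Matrix.one_mul,
    Matrix.mul_assoc, nonsing_inv_mul D hD, Matrix.mul_one]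

section

variable {t : ℝ}

theorem pow_six_eq_one_iff_sq_eq_one : t ^ 6 = 1 ↔ t ^ 2 = 1 := by
  rw [show t ^ 6 = (t ^ 2) ^ 3 by ring, pow_eq_one_iff_of_nonneg (sq_nonneg t) three_ne_zero]

theorem sub_inv_ne_zero_of_sq_ne_one (h0 : t ≠ 0) (h1 : t ^ 2 ≠ 1) : t - t⁻¹ ≠ 0 := by
  rw [sub_ne_zero]
  contrapose! h1
  field_simp at h1
  exact h1

theorem zpow_three_sub_zpow_neg_three_ne_zero (h0 : t ≠ 0) (h1 : t ^ 2 ≠ 1) :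
    t ^ (3:ℤ) - t ^ (-3:ℤ) ≠ 0 := by
  rw [_root_.zpow_neg, zpow_ofNat, sub_ne_zero]
  contrapose! h1
  rw [← pow_six_eq_one_iff_sq_eq_one]
  field_simp at h1
  exact h1

theorem diagInv_mul_DG2 (h0 : t ≠ 0) (h1 : t ^ 2 ≠ 1) :
    !![(t - t⁻¹)⁻¹, 0; 0, (t ^ (3:ℤ) - t ^ (-3:ℤ))⁻¹] * DG2 t = 1 := by
  rw [DG2, mul_fin_two, inv_mul_cancel₀ (sub_inv_ne_zero_of_sq_ne_one h0 h1),
    inv_mul_cancel₀ (zpow_three_sub_zpow_neg_three_ne_zero h0 h1)]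
  simp [one_fin_two]

theorem MtG2_mul_diagInv_mul_MG2 (h0 : t ≠ 0) (h1 : t ^ 2 ≠ 1) :
    MtG2 t * !![(t - t⁻¹)⁻¹, 0; 0, (t ^ (3:ℤ) - t ^ (-3:ℤ))⁻¹] * MG2 t = DG2 t := by
  have h2 : t ^ 2 - 1 ≠ 0 := sub_ne_zero.2 h1
  have h6 : t ^ 6 - 1 ≠ 0 := sub_ne_zero.2 (pow_six_eq_one_iff_sq_eq_one.not.2 h1)
  simp only [MG2, MtG2, DG2, _root_.zpow_neg, zpow_ofNat, mul_fin_two,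
    EmbeddingLike.apply_eq_iff_eq, vecCons_inj, and_true]
  refine ⟨⟨?_, ?_⟩, ?_, ?_⟩ <;> field_simp <;> ring

end

theorem stmt_0 (t : ℝ) (ht : 1 < t) :
    MtG2 t * (DG2 t)⁻¹ * MG2 t = DG2 t ∧
    DG2 t * (MG2 t)⁻¹ * DG2 t = MtG2 t := by
  have h0 : t ≠ 0 := by positivity
  have h1 : t ^ 2 ≠ 1 := (one_lt_pow₀ ht two_ne_zero).ne'
  have hD := diagInv_mul_DG2 h0 h1
  have h : MtG2 t * (DG2 t)⁻¹ * MG2 t = DG2 t := by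
    rw [inv_eq_left_inv hD]
    exact MtG2_mul_diagInv_mul_MG2 h0 h1
  exact ⟨h, Matrix.mul_inv_mul_eq_of_mul_inv_mul_eq (isUnit_det_of_left_inverse hD) h⟩
end

section
/- Let t be a real number with t > 1. Define the symmetric 6×6 matrix M(t) with entries: M₁₁ = M₅₅ = (t−t⁻¹)(t⁸−t⁻⁸)/((t⁶+t⁻⁶)(t³−t⁻³)); M₁₂ = M₄₅ = (t−t⁻¹)(t⁵−t⁻⁵)(t²+t⁻²)/((t⁶+t⁻⁶)(t³−t⁻³)); M₂₂ = M₄₄ = (t⁴−t⁻⁴)(t⁵−t⁻⁵)/((t⁶+t⁻⁶)(t³−t⁻³)); M₁₃ = M₂₆ = M₄₆ = M₃₅ = (t⁴−t⁻⁴)/(t⁶+t⁻⁶); M₂₃ = M₃₄ = (t⁴−t⁻⁴)(t+t⁻¹)/(t⁶+t⁻⁶); M₃₃ = (t³−t⁻³)(t+t⁻¹)(t²+t⁻²)/(t⁶+t⁻⁶); M₁₆ = M₅₆ = (t−t⁻¹)(t²+t⁻²)/(t⁶+t⁻⁶); M₃₆ = (t³−t⁻³)(t²+t⁻²)/(t⁶+t⁻⁶);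 M₆₆ = (t⁴−t⁻⁴)(t³+t⁻³)/((t+t⁻¹)(t⁶+t⁻⁶)); M₁₄ = M₂₅ = (t²−t⁻²)(t⁴−t⁻⁴)/((t⁶+t⁻⁶)(t³−t⁻³)); M₂₄ = (t²−t⁻²)(t⁴−t⁻⁴)(t+t⁻¹)/((t⁶+t⁻⁶)(t³−t⁻³)); M₁₅ = (t−t⁻¹)(t⁴−t⁻⁴)/((t⁶+t⁻⁶)(t³−t⁻³)). Define the 6×6 matrix M̃(t) with diagonal entries t²−t⁻² and entries t⁻¹−t in positions (1,2),(2,3),(3,4),(4,5),(3,6) and their transposes, all other entries zero. Then M(t)·M̃(t) = (t−t⁻¹)²·I₆. -/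
open Matrix

/-- `t^k - t^(-k)` -/
noncomputable def fm (t : ℝ) (k : ℤ) : ℝ := t ^ k - t ^ (-k)

/-- `t^k + t^(-k)` -/
noncomputable def fp (t : ℝ) (k : ℤ) : ℝ := t ^ k + t ^ (-k)

/-- The symmetric matrix `M(t)` of the E₆ case. -/
noncomputable def ME6 (t : ℝ) : Matrix (Fin 6) (Fin 6) ℝ :=
  !![fm t 1 * fm t 8 / (fp t 6 * fm t 3),
     fm t 1 * fm t 5 * fp t 2 / (fp t 6 * fm t 3),
     fm t 4 / fp t 6,
     fm t 2 * fm t 4 / (fp t 6 * fm t 3),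
     fm t 1 * fm t 4 / (fp t 6 * fm t 3),
     fm t 1 * fp t 2 / fp t 6;
     fm t 1 * fm t 5 * fp t 2 / (fp t 6 * fm t 3),
     fm t 4 * fm t 5 / (fp t 6 * fm t 3),
     fm t 4 * fp t 1 / fp t 6,
     fm t 2 * fm t 4 * fp t 1 / (fp t 6 * fm t 3),
     fm t 2 * fm t 4 / (fp t 6 * fm t 3),
     fm t 4 / fp t 6;
     fm t 4 / fp t 6,
     fm t 4 * fp t 1 / fp t 6,
     fm t 3 * fp t 1 * fp t 2 / fp t 6,
     fm t 4 * fp t 1 / fp t 6,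
     fm t 4 / fp t 6,
     fm t 3 * fp t 2 / fp t 6;
     fm t 2 * fm t 4 / (fp t 6 * fm t 3),
     fm t 2 * fm t 4 * fp t 1 / (fp t 6 * fm t 3),
     fm t 4 * fp t 1 / fp t 6,
     fm t 4 * fm t 5 / (fp t 6 * fm t 3),
     fm t 1 * fm t 5 * fp t 2 / (fp t 6 * fm t 3),
     fm t 4 / fp t 6;
     fm t 1 * fm t 4 / (fp t 6 * fm t 3),
     fm t 2 * fm t 4 / (fp t 6 * fm t 3),
     fm t 4 / fp t 6,
     fm t 1 * fm t 5 * fp t 2 / (fp t 6 * fm t 3),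
     fm t 1 * fm t 8 / (fp t 6 * fm t 3),
     fm t 1 * fp t 2 / fp t 6;
     fm t 1 * fp t 2 / fp t 6,
     fm t 4 / fp t 6,
     fm t 3 * fp t 2 / fp t 6,
     fm t 4 / fp t 6,
     fm t 1 * fp t 2 / fp t 6,
     fm t 4 * fp t 3 / (fp t 1 * fp t 6)]

/-- The deformed Cartan-type matrix `M̃(t)` of E₆. -/
noncomputable def MtE6 (t : ℝ) : Matrix (Fin 6) (Fin 6) ℝ :=
  !![t ^ (2:ℤ) - t ^ (-2:ℤ), t⁻¹ - t, 0, 0, 0, 0;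
     t⁻¹ - t, t ^ (2:ℤ) - t ^ (-2:ℤ), t⁻¹ - t, 0, 0, 0;
     0, t⁻¹ - t, t ^ (2:ℤ) - t ^ (-2:ℤ), t⁻¹ - t, 0, t⁻¹ - t;
     0, 0, t⁻¹ - t, t ^ (2:ℤ) - t ^ (-2:ℤ), t⁻¹ - t, 0;
     0, 0, 0, t⁻¹ - t, t ^ (2:ℤ) - t ^ (-2:ℤ), 0;
     0, 0, t⁻¹ - t, 0, 0, t ^ (2:ℤ) - t ^ (-2:ℤ)]

/-!
Replacing each `t ^ (-k)` by `(t ^ k)⁻¹`, every entry of `M(t) * M̃(t)` becomes a rational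
function of `t` whose denominators are products of `t`, `t ^ 2 + 1`, `t ^ 12 + 1` and
`t ^ 6 - 1` (from `t ^ 3 - t ^ (-3)`). Only the last one can vanish for real `t ≠ 0`, namely at
`t = ±1`; away from these points clearing denominators turns each of the 36 entries into a
polynomial identity.
-/

theorem ME6_mul_MtE6 {t : ℝ} (h0 : t ≠ 0) (h6 : t ^ 6 ≠ 1) :
    ME6 t * MtE6 t = ((t - t⁻¹) ^ 2) • (1 : Matrix (Fin 6) (Fin 6) ℝ) := by
  have h6' : t ^ 6 - 1 ≠ 0 := sub_ne_zero.mpr h6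
  ext i j
  fin_cases i <;> fin_cases j <;>
  · simp only [ME6, MtE6, fm, fp, mul_apply, Fin.sum_univ_six, Matrix.smul_apply, one_apply,
      of_apply, cons_val', cons_val_fin_one, cons_val, cons_val_zero, cons_val_one, Fin.reduceEq,
      Fin.isValue, Fin.zero_eta, Fin.mk_one, Fin.reduceFinMk, if_true, if_false, smul_eq_mul]
    field_simp
    ring

theorem stmt_3 (t : ℝ) (ht : 1 < t) :
    ME6 t * MtE6 t = ((t - t⁻¹) ^ 2) • (1 : Matrix (Fin 6) (Fin 6) ℝ) :=
  ME6_mul_MtE6 (zero_lt_one.trans ht).ne' (one_lt_pow₀ ht (by norm_num)).ne'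
end

section
/- Fix an integer n ≥ 4 and a real number t > 1. Define the symmetric n×n matrix M(t): for 1 ≤ i,j ≤ n−2, M_ij(t) = (t^{min(i,j)} − t^{−min(i,j)})(t^{n−1−max(i,j)} + t^{−(n−1−max(i,j))})/(t^{n−1} + t^{−(n−1)}); for 1 ≤ i ≤ n−2, M_{n,i}(t) = M_{n−1,i}(t) = (t^i − t^{−i})/(t^{n−1} + t^{−(n−1)}); M_{n,n−1}(t) = (t^{n−2} − t^{−(n−2)})/((t+t⁻¹)(t^{n−1}+t^{−(n−1)})); M_{n−1,n−1}(t) = M_{n,n}(t) = (t^n − t^{−n})/((t+t⁻¹)(t^{n−1}+t^{−(n−1)})). Define the n×n matrix M̃(t) with diagonal entries t²−t⁻², entries −(t−t⁻¹) in positions (i,i+1) and (i+1,i) for 1 ≤ i ≤ n−2 and in positions (n−2,n),(n,n−2), and zeros elsewhere. Then M(t)·M̃(t) = (t−t⁻¹)²·Iₙ. -/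
open Matrix

/-- The matrix `M(t)` of the Dₙ case (indices `i j : Fin n` encode the
1-based indices `i+1`, `j+1`). -/
noncomputable def MDn (n : ℕ) (t : ℝ) : Matrix (Fin n) (Fin n) ℝ :=
  fun i j =>
    let I : ℕ := i.1 + 1
    let J : ℕ := j.1 + 1
    if I ≤ n - 2 ∧ J ≤ n - 2 then
      (t ^ (min I J : ℤ) - t ^ (-(min I J : ℤ))) *
        (t ^ ((n : ℤ) - 1 - (max I J : ℤ)) + t ^ (-((n : ℤ) - 1 - (max I J : ℤ)))) /
        (t ^ ((n : ℤ) - 1) + t ^ (-((n : ℤ) - 1)))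
    else if n - 1 ≤ I ∧ J ≤ n - 2 then
      (t ^ (J : ℤ) - t ^ (-(J : ℤ))) / (t ^ ((n : ℤ) - 1) + t ^ (-((n : ℤ) - 1)))
    else if n - 1 ≤ J ∧ I ≤ n - 2 then
      (t ^ (I : ℤ) - t ^ (-(I : ℤ))) / (t ^ ((n : ℤ) - 1) + t ^ (-((n : ℤ) - 1)))
    else if I ≠ J then
      (t ^ ((n : ℤ) - 2) - t ^ (-((n : ℤ) - 2))) /
        ((t + t⁻¹) * (t ^ ((n : ℤ) - 1) + t ^ (-((n : ℤ) - 1))))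
    else
      (t ^ (n : ℤ) - t ^ (-(n : ℤ))) /
        ((t + t⁻¹) * (t ^ ((n : ℤ) - 1) + t ^ (-((n : ℤ) - 1))))

/-- The deformed Cartan-type matrix `M̃(t)` of Dₙ. -/
noncomputable def MtDn (n : ℕ) (t : ℝ) : Matrix (Fin n) (Fin n) ℝ :=
  fun i j =>
    let I : ℕ := i.1 + 1
    let J : ℕ := j.1 + 1
    if I = J then t ^ (2:ℤ) - t ^ (-2:ℤ)
    else if (J = I + 1 ∧ I ≤ n - 2) ∨ (I = J + 1 ∧ J ≤ n - 2) ∨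
        (I = n - 2 ∧ J = n) ∨ (I = n ∧ J = n - 2) then -(t - t⁻¹)
    else 0

/-! Since `M̃(t) = (t - t⁻¹)((t + t⁻¹)·1 - A)` with `A` the adjacency matrix of the Dₙ diagram,
the claim says that every row of `M(t)`, read as a function on the nodes, is harmonic for the
deformed Laplacian `(t + t⁻¹)·1 - A` except for a jump `t - t⁻¹` at its own node.
Both `q_k = t^k - t^(-k)` and `c_k = t^k + t^(-k)` satisfy `x_(k+1) + x_(k-1) = (t + t⁻¹) x_k`.
On the chain `1, …, n-2` a row is `q_min · c_(n-1-max) / c_(n-1)`, harmonic on either side of the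
diagonal, and the jump on the diagonal is the Wronskian identity
`q_(a+1) c_(b+1) - q_a c_b = (t - t⁻¹) c_(a+b+1)`. At the branch node the two spinor entries
together take the place of the chain value at node `n-1`, because `c_0 = 2`. -/

section Laurent

variable {K : Type*} [Field K] {t : K}

def zpowSubInv (t : K) (k : ℤ) : K := t ^ k - t ^ (-k)

def zpowAddInv (t : K) (k : ℤ) : K := t ^ k + t ^ (-k)

@[simp] lemma zpowSubInv_zero : zpowSubInv t 0 = 0 := by simp [zpowSubInv]

@[simp] lemma zpowAddInv_zero : zpowAddInv t 0 = 2 := by norm_num [zpowAddInv]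

@[simp] lemma zpowAddInv_one : zpowAddInv t 1 = t + t⁻¹ := by simp [zpowAddInv]

lemma zpow_two_sub_zpow_neg_two (t : K) : t ^ (2 : ℤ) - t ^ (-2 : ℤ) = (t - t⁻¹) * (t + t⁻¹) := by
  rw [_root_.zpow_neg, zpow_two]
  ring

lemma zpowSubInv_add_one_add_sub_one (ht : t ≠ 0) (k : ℤ) :
    zpowSubInv t (k + 1) + zpowSubInv t (k - 1) = (t + t⁻¹) * zpowSubInv t k := by
  simp only [zpowSubInv, neg_add, neg_sub, zpow_add₀ ht, zpow_sub₀ ht, _root_.zpow_neg, zpow_one]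
  ring

lemma zpowAddInv_add_one_add_sub_one (ht : t ≠ 0) (k : ℤ) :
    zpowAddInv t (k + 1) + zpowAddInv t (k - 1) = (t + t⁻¹) * zpowAddInv t k := by
  simp only [zpowAddInv, neg_add, neg_sub, zpow_add₀ ht, zpow_sub₀ ht, _root_.zpow_neg, zpow_one]
  ring

lemma zpowSubInv_add_one_sub_sub_one (ht : t ≠ 0) (k : ℤ) :
    zpowSubInv t (k + 1) - zpowSubInv t (k - 1) = (t - t⁻¹) * zpowAddInv t k := by
  simp only [zpowSubInv, zpowAddInv, neg_add, neg_sub, zpow_add₀ ht, zpow_sub₀ ht, _root_.zpow_neg,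
    zpow_one]
  ring

lemma zpowSubInv_mul_zpowAddInv_wronskian (ht : t ≠ 0) (a b : ℤ) :
    zpowSubInv t (a + 1) * zpowAddInv t (b + 1) - zpowSubInv t a * zpowAddInv t b =
      (t - t⁻¹) * zpowAddInv t (a + b + 1) := by
  simp only [zpowSubInv, zpowAddInv, neg_add, zpow_add₀ ht, _root_.zpow_neg, zpow_one]
  field_simp
  ring

end Laurent

lemma zpowAddInv_pos {t : ℝ} (ht : 0 < t) (k : ℤ) : 0 < zpowAddInv t k := by
  unfold zpowAddInv
  positivity

section Green

variable {K : Type*} [Field K] {n : ℕ} {t : K}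

/-- The chain block of `M(t)` in the 1-based node labels `I, J`. It is defined for all integers, so
that `greenDn n t I 0 = 0` stands in for the missing left neighbour of node `1`. -/
def greenDn (n : ℕ) (t : K) (I J : ℤ) : K :=
  zpowSubInv t (min I J) * zpowAddInv t (n - 1 - max I J) / zpowAddInv t (n - 1)

lemma greenDn_zero_right {I : ℤ} (hI : 0 ≤ I) : greenDn n t I 0 = 0 := by
  simp [greenDn, min_eq_right hI]

lemma greenDn_last_right {I : ℤ} (hI : I ≤ n - 1) :
    greenDn n t I (n - 1) = 2 * zpowSubInv t I / zpowAddInv t (n - 1) := by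
  simp [greenDn, min_eq_left hI, max_eq_right hI, mul_comm]

lemma greenDn_harmonic (ht : t ≠ 0) (hc : zpowAddInv t (n - 1) ≠ 0) (I J : ℤ) :
    (t + t⁻¹) * greenDn n t I J - (greenDn n t I (J - 1) + greenDn n t I (J + 1)) =
      if I = J then t - t⁻¹ else 0 := by
  unfold greenDn
  rcases lt_trichotomy J I with hJI | rfl | hIJ
  · rw [if_neg hJI.ne', min_eq_right hJI.le, max_eq_left hJI.le, min_eq_right (by omega),
      max_eq_left (by omega), min_eq_right (by omega), max_eq_left (by omega)]
    linear_combination (-(zpowAddInv t (n - 1 - I)) / zpowAddInv t (n - 1)) *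
      zpowSubInv_add_one_add_sub_one ht J
  · rw [if_pos rfl, min_self, max_self, min_eq_right (by omega), max_eq_left (by omega),
      min_eq_left (by omega), max_eq_right (by omega)]
    have hw := zpowSubInv_mul_zpowAddInv_wronskian ht J (n - 1 - (J + 1))
    rw [show n - 1 - (J + 1) + 1 = n - 1 - J by ring,
      show J + (n - 1 - (J + 1)) + 1 = n - 1 by ring] at hw
    calc _ = ((t + t⁻¹) * zpowSubInv t J * zpowAddInv t (n - 1 - J)
            - zpowSubInv t (J - 1) * zpowAddInv t (n - 1 - J)
            - zpowSubInv t J * zpowAddInv t (n - 1 - (J + 1))) / zpowAddInv t (n - 1) := by ring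
      _ = (t - t⁻¹) * zpowAddInv t (n - 1) / zpowAddInv t (n - 1) := by
        congr 1
        linear_combination hw - zpowAddInv t (n - 1 - J) * zpowSubInv_add_one_add_sub_one ht J
      _ = t - t⁻¹ := mul_div_cancel_right₀ _ hc
  · rw [if_neg hIJ.ne, min_eq_left hIJ.le, max_eq_right hIJ.le, min_eq_left (by omega),
      max_eq_right (by omega), min_eq_left (by omega), max_eq_right (by omega)]
    have hr := zpowAddInv_add_one_add_sub_one ht (n - 1 - J)
    rw [show n - 1 - J + 1 = n - 1 - (J - 1) by ring, show n - 1 - J - 1 = n - 1 - (J + 1) by ring]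
      at hr
    linear_combination (-(zpowSubInv t I) / zpowAddInv t (n - 1)) * hr

end Green

section Entries

/- Node `i : Fin n` is node `i.1 + 1` of the diagram: the chain nodes are those with
`i.1 + 3 ≤ n`, the two spinor nodes those with `n ≤ i.1 + 2`. -/

variable {n : ℕ} {t : ℝ} {i j : Fin n}

lemma MDn_apply_chain_chain (hi : i.1 + 3 ≤ n) (hj : j.1 + 3 ≤ n) :
    MDn n t i j = greenDn n t (i.1 + 1) (j.1 + 1) := by
  simp only [MDn]
  rw [if_pos (by omega)]
  push_cast
  rfl

lemma MDn_apply_spin_chain (hi : n ≤ i.1 + 2) (hj : j.1 + 3 ≤ n) :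
    MDn n t i j = zpowSubInv t (j.1 + 1) / zpowAddInv t (n - 1) := by
  simp only [MDn]
  rw [if_neg (by omega), if_pos (by omega)]
  push_cast
  rfl

lemma MDn_apply_chain_spin (hi : i.1 + 3 ≤ n) (hj : n ≤ j.1 + 2) :
    MDn n t i j = zpowSubInv t (i.1 + 1) / zpowAddInv t (n - 1) := by
  simp only [MDn]
  rw [if_neg (by omega), if_neg (by omega), if_pos (by omega)]
  push_cast
  rfl

lemma MDn_apply_spin_spin (hi : n ≤ i.1 + 2) (hj : n ≤ j.1 + 2) :
    MDn n t i j = (if i = j then zpowSubInv t n else zpowSubInv t (n - 2)) /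
      ((t + t⁻¹) * zpowAddInv t (n - 1)) := by
  simp only [MDn, Fin.ext_iff]
  rw [if_neg (by omega), if_neg (by omega), if_neg (by omega)]
  by_cases hij : i.1 = j.1
  · rw [if_neg (by omega), if_pos hij]; rfl
  · rw [if_pos (by omega), if_neg hij]; rfl

lemma MDn_apply_spin_add_spin {b c : Fin n} (hi : n ≤ i.1 + 2) (hb : b.1 + 2 = n)
    (hc : c.1 + 1 = n) :
    MDn n t i b + MDn n t i c =
      (zpowSubInv t n + zpowSubInv t (n - 2)) / ((t + t⁻¹) * zpowAddInv t (n - 1)) := by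
  rw [MDn_apply_spin_spin hi (by omega), MDn_apply_spin_spin hi (by omega)]
  rcases (show i = b ∨ i = c by simp only [Fin.ext_iff]; omega) with rfl | rfl
  · rw [if_pos rfl, if_neg (by simp [Fin.ext_iff]; omega)]
    ring
  · rw [if_neg (by simp [Fin.ext_iff]; omega), if_pos rfl]
    ring

end Entries

section Columns

variable {n : ℕ} {t : ℝ} (A : Matrix (Fin n) (Fin n) ℝ) (i : Fin n) {j : Fin n}

lemma mul_MtDn_apply_first {b : Fin n} (hn : 4 ≤ n) (hj : j.1 = 0) (hb : b.1 = 1) :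
    (A * MtDn n t) i j = (t - t⁻¹) * ((t + t⁻¹) * A i j - A i b) := by
  have hcol : ∀ k, MtDn n t k j =
      (if k = j then (t - t⁻¹) * (t + t⁻¹) else 0) - (if k = b then t - t⁻¹ else 0) := by
    intro k
    have := k.2
    simp only [MtDn, Fin.ext_iff, hj, hb]
    split_ifs <;> first | omega | (rw [zpow_two_sub_zpow_neg_two]; ring) | ring
  simp only [mul_apply, hcol, mul_sub, Finset.sum_sub_distrib, mul_ite, mul_zero,
    Finset.sum_ite_eq', Finset.mem_univ, if_true]
  ring

lemma mul_MtDn_apply_chain {a b : Fin n} (ha : a.1 + 1 = j.1) (hb : b.1 = j.1 + 1)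
    (hbn : b.1 + 3 ≤ n) :
    (A * MtDn n t) i j = (t - t⁻¹) * ((t + t⁻¹) * A i j - (A i a + A i b)) := by
  have hcol : ∀ k, MtDn n t k j = (if k = j then (t - t⁻¹) * (t + t⁻¹) else 0) -
      ((if k = a then t - t⁻¹ else 0) + (if k = b then t - t⁻¹ else 0)) := by
    intro k
    have := k.2
    simp only [MtDn, Fin.ext_iff, ← ha, hb]
    split_ifs <;> first | omega | (rw [zpow_two_sub_zpow_neg_two]; ring) | ring
  simp only [mul_apply, hcol, mul_sub, mul_add, Finset.sum_sub_distrib, Finset.sum_add_distrib,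
    mul_ite, mul_zero, Finset.sum_ite_eq', Finset.mem_univ, if_true]
  ring

lemma mul_MtDn_apply_branch {a b c : Fin n} (hj : j.1 + 3 = n) (ha : a.1 + 4 = n)
    (hb : b.1 + 2 = n) (hc : c.1 + 1 = n) :
    (A * MtDn n t) i j = (t - t⁻¹) * ((t + t⁻¹) * A i j - (A i a + A i b + A i c)) := by
  have hcol : ∀ k, MtDn n t k j = (if k = j then (t - t⁻¹) * (t + t⁻¹) else 0) -
      ((if k = a then t - t⁻¹ else 0) + (if k = b then t - t⁻¹ else 0) +
        (if k = c then t - t⁻¹ else 0)) := by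
    intro k
    have := k.2
    simp only [MtDn, Fin.ext_iff]
    split_ifs <;> first | omega | (rw [zpow_two_sub_zpow_neg_two]; ring) | ring
  simp only [mul_apply, hcol, mul_sub, mul_add, Finset.sum_sub_distrib, Finset.sum_add_distrib,
    mul_ite, mul_zero, Finset.sum_ite_eq', Finset.mem_univ, if_true]
  ring

lemma mul_MtDn_apply_spin {a : Fin n} (hj : n ≤ j.1 + 2) (ha : a.1 + 3 = n) :
    (A * MtDn n t) i j = (t - t⁻¹) * ((t + t⁻¹) * A i j - A i a) := by
  have hcol : ∀ k, MtDn n t k j =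
      (if k = j then (t - t⁻¹) * (t + t⁻¹) else 0) - (if k = a then t - t⁻¹ else 0) := by
    intro k
    have := k.2
    have := j.2
    simp only [MtDn, Fin.ext_iff]
    split_ifs <;> first | omega | (rw [zpow_two_sub_zpow_neg_two]; ring) | ring
  simp only [mul_apply, hcol, mul_sub, Finset.sum_sub_distrib, mul_ite, mul_zero,
    Finset.sum_ite_eq', Finset.mem_univ, if_true]
  ring

lemma mul_MtDn_apply_chain_of_row (f : ℤ → ℝ) (hf0 : f 0 = 0)
    (hf : ∀ k : Fin n, k.1 + 3 ≤ n → A i k = f (k.1 + 1)) (hn : 4 ≤ n) (hj : j.1 + 4 ≤ n) :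
    (A * MtDn n t) i j =
      (t - t⁻¹) * ((t + t⁻¹) * f (j.1 + 1) - (f (j.1 + 1 - 1) + f (j.1 + 1 + 1))) := by
  obtain ⟨b, hb⟩ : ∃ b : Fin n, b.1 = j.1 + 1 := ⟨⟨j.1 + 1, by omega⟩, rfl⟩
  have hfb : A i b = f (j.1 + 1 + 1) := by rw [hf b (by omega), hb]; push_cast; rfl
  rw [add_sub_cancel_right, ← hf j (by omega), ← hfb]
  rcases Nat.eq_zero_or_pos j.1 with hj0 | hj0
  · rw [mul_MtDn_apply_first A i hn hj0 (b := b) (by omega), hj0, Nat.cast_zero, hf0, zero_add]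
  · obtain ⟨a, ha⟩ : ∃ a : Fin n, a.1 + 1 = j.1 := ⟨⟨j.1 - 1, by omega⟩, by simp; omega⟩
    rw [mul_MtDn_apply_chain A i ha hb (by omega), hf a (by omega), ← ha]
    push_cast
    rfl

end Columns

section Product

variable {n : ℕ} {t : ℝ} {i j : Fin n}

lemma MDn_mul_MtDn_apply_chain (ht : 0 < t) (hn : 4 ≤ n) (hj : j.1 + 4 ≤ n) :
    (MDn n t * MtDn n t) i j = (t - t⁻¹) ^ 2 * if i = j then 1 else 0 := by
  have ht0 := ht.ne'
  by_cases hi : i.1 + 3 ≤ n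
  · rw [mul_MtDn_apply_chain_of_row _ _ (greenDn n t (i.1 + 1)) (greenDn_zero_right (by omega))
      (fun k hk => MDn_apply_chain_chain hi hk) hn hj,
      greenDn_harmonic ht0 (zpowAddInv_pos ht _).ne']
    simp only [add_left_inj, Nat.cast_inj, ← Fin.ext_iff]
    split_ifs <;> ring
  · rw [mul_MtDn_apply_chain_of_row _ _ (fun J => zpowSubInv t J / zpowAddInv t (n - 1))
      (by simp) (fun k hk => MDn_apply_spin_chain (by omega) hk) hn hj,
      if_neg (by rintro rfl; omega)]
    linear_combination (-(t - t⁻¹) / zpowAddInv t (n - 1)) *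
      zpowSubInv_add_one_add_sub_one ht0 (j.1 + 1)

lemma MDn_mul_MtDn_apply_branch (ht : 0 < t) (hn : 4 ≤ n) (hj : j.1 + 3 = n) :
    (MDn n t * MtDn n t) i j = (t - t⁻¹) ^ 2 * if i = j then 1 else 0 := by
  have ht0 := ht.ne'
  obtain ⟨a, ha⟩ : ∃ a : Fin n, a.1 + 4 = n := ⟨⟨n - 4, by omega⟩, by simp; omega⟩
  obtain ⟨b, hb⟩ : ∃ b : Fin n, b.1 + 2 = n := ⟨⟨n - 2, by omega⟩, by simp; omega⟩
  obtain ⟨c, hc⟩ : ∃ c : Fin n, c.1 + 1 = n := ⟨⟨n - 1, by omega⟩, by simp; omega⟩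
  rw [mul_MtDn_apply_branch _ i hj ha hb hc]
  by_cases hi : i.1 + 3 ≤ n
  · have hgc : MDn n t i c = greenDn n t (i.1 + 1) (j.1 + 1 + 1) / 2 := by
      rw [MDn_apply_chain_spin hi (by omega), show (j.1 : ℤ) + 1 + 1 = n - 1 by omega,
        greenDn_last_right (by omega)]
      ring
    have hgb : MDn n t i b = MDn n t i c := by
      rw [MDn_apply_chain_spin hi (by omega), MDn_apply_chain_spin hi (by omega)]
    have hga : MDn n t i a = greenDn n t (i.1 + 1) (j.1 + 1 - 1) := by
      rw [MDn_apply_chain_chain hi (by omega)]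
      congr 1
      omega
    rw [hga, hgb, hgc, MDn_apply_chain_chain hi (by omega), add_assoc, add_halves,
      greenDn_harmonic ht0 (zpowAddInv_pos ht _).ne']
    simp only [add_left_inj, Nat.cast_inj, ← Fin.ext_iff]
    split_ifs <;> ring
  · have hJ : (j.1 : ℤ) + 1 = n - 2 := by omega
    have haJ : (a.1 : ℤ) + 1 = n - 3 := by omega
    rw [add_assoc, MDn_apply_spin_add_spin (by omega) hb hc,
      MDn_apply_spin_chain (by omega) (by omega), MDn_apply_spin_chain (by omega) (by omega), hJ,
      haJ, if_neg (by rintro rfl; omega)]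
    have h1 := zpowSubInv_add_one_add_sub_one ht0 (n - 2)
    have h2 := zpowSubInv_add_one_add_sub_one ht0 (n - 1)
    rw [show (n : ℤ) - 2 + 1 = n - 1 by ring, show (n : ℤ) - 2 - 1 = n - 3 by ring] at h1
    rw [show (n : ℤ) - 1 + 1 = n by ring, show (n : ℤ) - 1 - 1 = n - 2 by ring] at h2
    rw [h2, mul_div_mul_left _ _ (by positivity)]
    linear_combination (-(t - t⁻¹) / zpowAddInv t (n - 1)) * h1

lemma MDn_mul_MtDn_apply_spin (ht : 0 < t) (hn : 3 ≤ n) (hj : n ≤ j.1 + 2) :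
    (MDn n t * MtDn n t) i j = (t - t⁻¹) ^ 2 * if i = j then 1 else 0 := by
  have ht0 := ht.ne'
  have hc := (zpowAddInv_pos ht (n - 1)).ne'
  obtain ⟨a, ha⟩ : ∃ a : Fin n, a.1 + 3 = n := ⟨⟨n - 3, by omega⟩, by simp; omega⟩
  rw [mul_MtDn_apply_spin _ i hj ha]
  by_cases hi : i.1 + 3 ≤ n
  · rw [MDn_apply_chain_spin hi hj, MDn_apply_chain_chain hi (by omega), greenDn,
      min_eq_left (by omega), max_eq_right (by omega), show (n : ℤ) - 1 - (a.1 + 1) = 1 by omega,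
      zpowAddInv_one, if_neg (by rintro rfl; omega)]
    ring
  · have hs : t + t⁻¹ ≠ 0 := by positivity
    have haI : (a.1 : ℤ) + 1 = n - 2 := by omega
    rw [MDn_apply_spin_spin (by omega) hj, MDn_apply_spin_chain (by omega) (by omega), haI,
      ← mul_div_assoc, mul_div_mul_left _ _ hs]
    by_cases hij : i = j
    · have h := zpowSubInv_add_one_sub_sub_one ht0 (n - 1)
      rw [show (n : ℤ) - 1 + 1 = n by ring, show (n : ℤ) - 1 - 1 = n - 2 by ring] at h
      rw [if_pos hij, if_pos hij, ← sub_div, h, mul_div_assoc, div_self hc]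
      ring
    · rw [if_neg hij, if_neg hij]
      ring

end Product

theorem stmt_6 (n : ℕ) (hn : 4 ≤ n) (t : ℝ) (ht : 1 < t) :
    MDn n t * MtDn n t = ((t - t⁻¹) ^ 2) • (1 : Matrix (Fin n) (Fin n) ℝ) := by
  have ht0 : 0 < t := one_pos.trans ht
  ext i j
  rw [Matrix.smul_apply, one_apply, smul_eq_mul]
  obtain hj | hj | hj : j.1 + 4 ≤ n ∨ j.1 + 3 = n ∨ n ≤ j.1 + 2 := by omega
  · exact MDn_mul_MtDn_apply_chain ht0 hn hj
  · exact MDn_mul_MtDn_apply_branch ht0 hn hj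
  · exact MDn_mul_MtDn_apply_spin ht0 (by omega) hj
end
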